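/- arXiv:2603.20861 — 3 statements merged into one kernel-verified Lean document; each statement's English description precedes it below -/
import Mathlib

section
/- Let φ : X → Y be a local homeomorphism between locally compact Hausdorff spaces and let A be a Hausdorff topological abelian group. For every f ∈ C_c(X,A) and every y ∈ Y, the set φ⁻¹(y) ∩ supp(f) is finite, so the pushforward (φ_* f)(y) = Σ_{x ∈ φ⁻¹(y)} f(x) is a well-defined finite sum, and φ_* f is a continuous compactly supported function on Y. Thus φ_* : C_c(X,A) → C_c(Y,A) is a group homomorphism. -/
/-!
A local homeomorphism has discrete fibres, so a fibre meets the compact set `tsupport f` in a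
finite set. Near a point `y₀`, separate the finitely many points `x` of `φ⁻¹{y₀} ∩ tsupport f` by
disjoint charts of `φ`; since `φ` maps the compact set of points of `tsupport f` outside these
charts onto a closed set avoiding `y₀`, for `y` near `y₀` the fibre sum is `∑ₓ f (σₓ y)` over the
local inverses `σₓ` of the charts, which is continuous.
-/

open Set Function Topology

variable {X Y A : Type*} [TopologicalSpace X] [TopologicalSpace Y]

/-- The pushforward `φ_* f`. -/
noncomputable def fiberSum [AddCommMonoid A] (φ : X → Y) (f : X → A) (y : Y) : A :=
  ∑ᶠ x ∈ φ ⁻¹' {y}, f x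

theorem isOpen_setOf_preimage_singleton_inter_subset [T2Space Y] {φ : X → Y}
    (hφ : Continuous φ) {K U : Set X} (hK : IsCompact K) (hU : IsOpen U) :
    IsOpen {y | φ ⁻¹' {y} ∩ K ⊆ U} := by
  have : {y | φ ⁻¹' {y} ∩ K ⊆ U} = (φ '' (K \ U))ᶜ :=
    Set.ext fun _ => ⟨fun h ⟨_, ⟨hxK, hxU⟩, hxy⟩ => hxU (h ⟨hxy, hxK⟩),
      fun h x ⟨hxy, hxK⟩ => by_contra fun hxU => h ⟨x, ⟨hxK, hxU⟩, hxy⟩⟩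
  rw [this]
  exact ((hK.diff hU).image hφ).isClosed.isOpen_compl

theorem fiberSum_eq_sum_symm [AddCommMonoid A] {φ : X → Y} {f : X → A} {S : Finset X}
    {e : X → OpenPartialHomeomorph X Y} (he : ∀ x ∈ S, EqOn φ (e x) (e x).source)
    (hdisj : (S : Set X).PairwiseDisjoint fun x => (e x).source) {y : Y}
    (hy : ∀ x ∈ S, y ∈ (e x).target)
    (hcover : φ ⁻¹' {y} ∩ support f ⊆ ⋃ x ∈ S, (e x).source) :
    fiberSum φ f y = ∑ x ∈ S, f ((e x).symm y) := by
  classical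
  have symm_mem_source : ∀ x ∈ S, (e x).symm y ∈ (e x).source := fun x hx =>
    (e x).map_target (hy x hx)
  have apply_symm : ∀ x ∈ S, φ ((e x).symm y) = y := fun x hx => by
    rw [he x hx (symm_mem_source x hx), (e x).right_inv (hy x hx)]
  have symm_apply : ∀ x ∈ S, ∀ z ∈ (e x).source, φ z = y → (e x).symm y = z := by
    rintro x hx z hz rfl
    rw [he x hx hz, (e x).left_inv hz]
  have hinj : InjOn (fun x => (e x).symm y) S :=
    fun x₁ hx₁ x₂ hx₂ (h12 : (e x₁).symm y = (e x₂).symm y) =>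
      hdisj.elim hx₁ hx₂ <| not_disjoint_iff.mpr
        ⟨_, symm_mem_source x₁ hx₁, h12 ▸ symm_mem_source x₂ hx₂⟩
  rw [fiberSum, finsum_mem_eq_sum_of_subset f (t := S.image fun x => (e x).symm y),
    Finset.sum_image hinj]
  · rintro z hz
    obtain ⟨x, hx, hzx⟩ := mem_iUnion₂.mp (hcover hz)
    exact Finset.mem_image.mpr ⟨x, hx, symm_apply x hx z hzx hz.1⟩
  · intro z hz
    obtain ⟨x, hx, rfl⟩ := Finset.mem_image.mp hz
    exact apply_symm x hx

namespace IsLocalHomeomorph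

variable {φ : X → Y}

theorem finite_preimage_singleton_inter [T1Space Y] (hφ : IsLocalHomeomorph φ) {K : Set X}
    (hK : IsCompact K) (y : Y) : (φ ⁻¹' {y} ∩ K).Finite :=
  (hK.inter_left (isClosed_singleton.preimage hφ.continuous)).finite <|
    (hφ.isLocalHomeomorphOn.mono (subset_univ _)).isDiscrete_of_image <|
      (subsingleton_singleton.anti <| (image_mono inter_subset_left).trans
        (image_preimage_subset φ {y})).isDiscrete

theorem exists_charts_pairwiseDisjoint [T2Space X] (hφ : IsLocalHomeomorph φ) {S : Set X}
    (hS : S.Finite) : ∃ e : X → OpenPartialHomeomorph X Y,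
      (∀ x, x ∈ (e x).source ∧ φ = e x) ∧ S.PairwiseDisjoint fun x => (e x).source := by
  choose e he hφe using hφ
  obtain ⟨U, hU, hUdisj⟩ := hS.t2_separation
  refine ⟨fun x => (e x).restrOpen (U x) (hU x).2, fun x => ⟨⟨he x, (hU x).1⟩, hφe x⟩, ?_⟩
  exact hUdisj.mono fun x => inter_subset_right

theorem continuous_fiberSum [T2Space X] [T2Space Y] [AddCommMonoid A] [TopologicalSpace A]
    [ContinuousAdd A] (hφ : IsLocalHomeomorph φ) {f : X → A} (hf : Continuous f)
    (hsupp : HasCompactSupport f) : Continuous (fiberSum φ f) := by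
  refine continuous_iff_continuousAt.mpr fun y₀ => ?_
  have hS := hφ.finite_preimage_singleton_inter hsupp y₀
  obtain ⟨e, he, hdisj⟩ := hφ.exists_charts_pairwiseDisjoint hS
  set S := hS.toFinset
  set W := (⋂ x ∈ S, (e x).target) ∩ {y | φ ⁻¹' {y} ∩ tsupport f ⊆ ⋃ x ∈ S, (e x).source}
  have hW : W ∈ 𝓝 y₀ := by
    refine IsOpen.mem_nhds ((isOpen_biInter_finset fun x _ => (e x).open_target).inter <|
      isOpen_setOf_preimage_singleton_inter_subset hφ.continuous hsupp <|
        isOpen_biUnion fun x _ => (e x).open_source) ⟨?_, ?_⟩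
    · refine mem_iInter₂.mpr fun x hx => ?_
      rw [← (hS.mem_toFinset.mp hx).1, (he x).2]
      exact (e x).map_source (he x).1
    · exact fun x hx => mem_biUnion (hS.mem_toFinset.mpr hx) (he x).1
  have hsum : ContinuousOn (fun y => ∑ x ∈ S, f ((e x).symm y)) W :=
    continuousOn_finsetSum S fun x hx => hf.comp_continuousOn <|
      (e x).continuousOn_symm.mono fun y hy => mem_iInter₂.mp hy.1 x hx
  refine (hsum.continuousAt hW).congr <| Filter.eventuallyEq_of_mem hW fun y hy => ?_
  refine (fiberSum_eq_sum_symm (fun x _ => (he x).2 ▸ eqOn_refl _ _) ?_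
    (fun x hx => mem_iInter₂.mp hy.1 x hx) ?_).symm
  · simpa only [S, hS.coe_toFinset] using hdisj
  · exact (inter_subset_inter_right _ (subset_tsupport f)).trans hy.2

end IsLocalHomeomorph

theorem HasCompactSupport.fiberSum [T2Space Y] [AddCommMonoid A] {φ : X → Y}
    (hφ : Continuous φ) {f : X → A} (hsupp : HasCompactSupport f) :
    HasCompactSupport (fiberSum φ f) := by
  refine HasCompactSupport.intro (hsupp.image hφ) fun y hy => ?_
  by_contra h
  obtain ⟨x, hx, hfx⟩ := exists_ne_zero_of_finsum_mem_ne_zero h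
  exact hy ⟨x, subset_tsupport f hfx, hx⟩

theorem fiberSum_add [T1Space Y] [AddCommMonoid A] {φ : X → Y} (hφ : IsLocalHomeomorph φ)
    {f g : X → A} (hf : HasCompactSupport f) (hg : HasCompactSupport g) (y : Y) :
    fiberSum φ (f + g) y = fiberSum φ f y + fiberSum φ g y :=
  finsum_mem_add_distrib'
    ((hφ.finite_preimage_singleton_inter hf y).subset <|
      inter_subset_inter_right _ (subset_tsupport f))
    ((hφ.finite_preimage_singleton_inter hg y).subset <|
      inter_subset_inter_right _ (subset_tsupport g))

theorem stmt_4_general (X Y : Type) [TopologicalSpace X] [TopologicalSpace Y]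
    [T2Space X] [T2Space Y]
    (A : Type) [AddCommGroup A] [TopologicalSpace A] [IsTopologicalAddGroup A]
    (φ : X → Y) (hφ : IsLocalHomeomorph φ)
    (f : X → A) (hf : Continuous f) (hsupp : HasCompactSupport f) :
    (∀ y : Y, (φ ⁻¹' {y} ∩ tsupport f).Finite) ∧
    Continuous (fun y : Y => ∑ᶠ x ∈ φ ⁻¹' {y}, f x) ∧
    HasCompactSupport (fun y : Y => ∑ᶠ x ∈ φ ⁻¹' {y}, f x) ∧
    (∀ g : X → A, Continuous g → HasCompactSupport g → ∀ y : Y,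
      (∑ᶠ x ∈ φ ⁻¹' {y}, (f x + g x)) =
        (∑ᶠ x ∈ φ ⁻¹' {y}, f x) + ∑ᶠ x ∈ φ ⁻¹' {y}, g x) :=
  ⟨hφ.finite_preimage_singleton_inter hsupp, hφ.continuous_fiberSum hf hsupp,
    hsupp.fiberSum hφ.continuous, fun _ _ hg => fiberSum_add hφ hsupp hg⟩

/-- For a local homeomorphism `φ : X → Y` between locally compact Hausdorff
spaces and a Hausdorff topological abelian group `A`, for every `f ∈ C_c(X,A)` each set
`φ⁻¹(y) ∩ supp f` is finite, so the pushforward `(φ_* f)(y) = ∑_{x ∈ φ⁻¹(y)} f x` is a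
well-defined finite sum; moreover `φ_* f` is continuous with compact support, and `φ_*` is
additive (a group homomorphism `C_c(X,A) → C_c(Y,A)`). -/
theorem stmt_4 (X Y : Type) [TopologicalSpace X] [TopologicalSpace Y]
    [LocallyCompactSpace X] [T2Space X] [LocallyCompactSpace Y] [T2Space Y]
    (A : Type) [AddCommGroup A] [TopologicalSpace A] [IsTopologicalAddGroup A] [T2Space A]
    (φ : X → Y) (hφ : IsLocalHomeomorph φ)
    (f : X → A) (hf : Continuous f) (hsupp : HasCompactSupport f) :
    (∀ y : Y, (φ ⁻¹' {y} ∩ tsupport f).Finite) ∧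
    Continuous (fun y : Y => ∑ᶠ x ∈ φ ⁻¹' {y}, f x) ∧
    HasCompactSupport (fun y : Y => ∑ᶠ x ∈ φ ⁻¹' {y}, f x) ∧
    (∀ g : X → A, Continuous g → HasCompactSupport g → ∀ y : Y,
      (∑ᶠ x ∈ φ ⁻¹' {y}, (f x + g x)) =
        (∑ᶠ x ∈ φ ⁻¹' {y}, f x) + ∑ᶠ x ∈ φ ⁻¹' {y}, g x) :=
  stmt_4_general X Y A φ hφ f hf hsupp
end

section
/- Let φ : X → Y and ψ : Y → Z be local homeomorphisms between locally compact Hausdorff spaces and A a Hausdorff topological abelian group. Then the compactly supported pushforwards satisfy (ψ ∘ φ)_* = ψ_* ∘ φ_* as homomorphisms C_c(X,A) → C_c(Z,A). -/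
/-!
A local homeomorphism is locally injective, so its fibers are discrete; being also closed, they
meet the compact support of `f` in a finite set. All sums involved are therefore finite, and the
identity is the decomposition of the finite set `(ψ ∘ φ)⁻¹{z} ∩ support f` into its disjoint
pieces over the fibers of `φ`.
-/

open Set Function

theorem IsLocallyInjective.isDiscrete_preimage_singleton {X Y : Type*} [TopologicalSpace X]
    {g : X → Y} (hg : IsLocallyInjective g) (y : Y) : IsDiscrete (g ⁻¹' {y}) := by
  refine isDiscrete_iff_forall_mem_exists_isOpen.mpr fun x hx => ?_
  obtain ⟨U, hUo, hxU, hinj⟩ := hg x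
  refine ⟨U, hUo, subset_antisymm ?_ ?_⟩
  · exact fun x' ⟨hx'U, hx'⟩ => hinj hx'U hxU (hx'.trans hx.symm)
  · rintro _ rfl
    exact ⟨hxU, hx⟩

theorem IsLocallyInjective.finite_preimage_singleton_inter {X Y : Type*} [TopologicalSpace X]
    [TopologicalSpace Y] [T1Space Y] {g : X → Y} (hg : IsLocallyInjective g) (hc : Continuous g)
    {K : Set X} (hK : IsCompact K) (y : Y) : (g ⁻¹' {y} ∩ K).Finite :=
  (hK.inter_left (isClosed_singleton.preimage hc)).finite
    ((hg.isDiscrete_preimage_singleton y).mono inter_subset_left)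

theorem finsum_mem_preimage_eq_finsum_mem_fiber {α β M : Type*} [AddCommMonoid M]
    (g : α → β) (f : α → M) {t : Set β} (h : (g ⁻¹' t ∩ support f).Finite) :
    ∑ᶠ x ∈ g ⁻¹' t, f x = ∑ᶠ y ∈ t, ∑ᶠ x ∈ g ⁻¹' {y}, f x := by
  set S := g ⁻¹' t ∩ support f
  have hfiber : ∀ y ∈ g '' S, (g ⁻¹' {y} ∩ support f).Finite := by
    rintro _ ⟨x, hx, rfl⟩
    refine h.subset fun x' ⟨hx', hfx'⟩ => ⟨?_, hfx'⟩
    rw [mem_preimage, mem_preimage.mp hx']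
    exact hx.1
  have hdisj : (g '' S).PairwiseDisjoint fun y => g ⁻¹' {y} ∩ support f :=
    (pairwiseDisjoint_fiber g _).mono fun _ => inter_subset_left
  have hunion : (⋃ y ∈ g '' S, g ⁻¹' {y} ∩ support f) = S := by
    rw [← iUnion₂_inter, biUnion_preimage_singleton]
    exact (subset_inter (subset_preimage_image g S) inter_subset_right).antisymm'
      fun x ⟨⟨x', hx', hgx⟩, hfx⟩ => ⟨show g x ∈ t from hgx ▸ hx'.1, hfx⟩
  have hsupp : ∀ y ∈ support fun y => ∑ᶠ x ∈ g ⁻¹' {y}, f x, y ∈ g '' S ↔ y ∈ t := by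
    intro y hy
    obtain ⟨x, rfl, hfx⟩ := exists_ne_zero_of_finsum_mem_ne_zero hy
    exact ⟨fun ⟨x', hx', hgx'⟩ => hgx' ▸ hx'.1, fun hy => ⟨x, ⟨hy, hfx⟩, rfl⟩⟩
  calc ∑ᶠ x ∈ g ⁻¹' t, f x
      = ∑ᶠ x ∈ ⋃ y ∈ g '' S, g ⁻¹' {y} ∩ support f, f x := by
        rw [hunion, finsum_mem_inter_support]
    _ = ∑ᶠ y ∈ g '' S, ∑ᶠ x ∈ g ⁻¹' {y} ∩ support f, f x :=
        finsum_mem_biUnion hdisj (h.image g) hfiber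
    _ = ∑ᶠ y ∈ t, ∑ᶠ x ∈ g ⁻¹' {y}, f x := by
        simp only [finsum_mem_inter_support]
        exact finsum_mem_inter_support_eq' _ _ _ hsupp

theorem stmt_5_general (X Y Z : Type) [TopologicalSpace X] [TopologicalSpace Y] [TopologicalSpace Z]
    [T2Space Z]
    (A : Type) [AddCommGroup A]
    (φ : X → Y) (hφ : IsLocalHomeomorph φ) (ψ : Y → Z) (hψ : IsLocalHomeomorph ψ)
    (f : X → A) (hsupp : HasCompactSupport f) :
    ∀ z : Z, (∑ᶠ x ∈ (ψ ∘ φ) ⁻¹' {z}, f x) =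
      ∑ᶠ y ∈ ψ ⁻¹' {z}, ∑ᶠ x ∈ φ ⁻¹' {y}, f x := by
  intro z
  have hψφ : IsLocalHomeomorph (ψ ∘ φ) := hψ.comp hφ
  have hfin : ((ψ ∘ φ) ⁻¹' {z} ∩ support f).Finite :=
    (hψφ.isLocallyInjective.finite_preimage_singleton_inter hψφ.continuous hsupp z).subset
      (inter_subset_inter_right _ (subset_tsupport f))
  exact finsum_mem_preimage_eq_finsum_mem_fiber φ f (t := ψ ⁻¹' {z}) hfin

/-- For local homeomorphisms `φ : X → Y`, `ψ : Y → Z` between locally compact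
Hausdorff spaces and a Hausdorff topological abelian group `A`, the compactly supported
pushforwards satisfy `(ψ ∘ φ)_* = ψ_* ∘ φ_*` on `C_c(X,A)`: pointwise, for every compactly
supported continuous `f` and every `z`,
`∑_{x ∈ (ψ∘φ)⁻¹(z)} f x = ∑_{y ∈ ψ⁻¹(z)} ∑_{x ∈ φ⁻¹(y)} f x`. -/
theorem stmt_5 (X Y Z : Type) [TopologicalSpace X] [TopologicalSpace Y] [TopologicalSpace Z]
    [LocallyCompactSpace X] [T2Space X] [LocallyCompactSpace Y] [T2Space Y]
    [LocallyCompactSpace Z] [T2Space Z]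
    (A : Type) [AddCommGroup A] [TopologicalSpace A] [IsTopologicalAddGroup A] [T2Space A]
    (φ : X → Y) (hφ : IsLocalHomeomorph φ) (ψ : Y → Z) (hψ : IsLocalHomeomorph ψ)
    (f : X → A) (hf : Continuous f) (hsupp : HasCompactSupport f) :
    ∀ z : Z, (∑ᶠ x ∈ (ψ ∘ φ) ⁻¹' {z}, f x) =
      ∑ᶠ y ∈ ψ ⁻¹' {z}, ∑ᶠ x ∈ φ ⁻¹' {y}, f x :=
  stmt_5_general X Y Z A φ hφ ψ hψ f hsupp
end

section
/- Let X be a locally compact Hausdorff totally disconnected space with a basis of compact open sets. Then C_c(X,ℤ), the group of compactly supported continuous integer-valued functions on X, is a free abelian group; indeed it is generated by the characteristic functions of compact open subsets of X. -/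
/-!
Extending by `0` at `∞` identifies `C_c(X, ℤ)` with the kernel of evaluation at `∞` on
`LocallyConstant (OnePoint X) ℤ`, and `OnePoint X` is profinite. By Nöbeling's theorem
`LocallyConstant (OnePoint X) ℤ` has a basis containing the constant function `1`, on which
evaluation at `∞` takes the value `1`; the kernel of a linear form taking the value `1` on a basis
vector is free. Generation is elementary: `f` has finite range and equals
`∑ c ∈ range f, c • 𝟙[f⁻¹{c}]`, where each `f⁻¹{c}` with `c ≠ 0` is compact open.
-/

open scoped CompactlySupported

universe u

open Submodule in
theorem Module.Basis.free_ker_of_apply_eq_one {R M ι : Type*} [Ring R] [AddCommGroup M]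
    [Module R M] (b : Basis ι R M) (φ : M →ₗ[R] R) {i₀ : ι} (h : φ (b i₀) = 1) :
    Module.Free R (LinearMap.ker φ) := by
  classical
  -- `π` projects onto `ker φ` along `b i₀`; the `π (b i)`, `i ≠ i₀`, form a basis of `ker φ`
  let π : M →ₗ[R] M := LinearMap.id - φ.smulRight (b i₀)
  have hπ_ker (x : M) : π x ∈ LinearMap.ker φ := by simp [π, h]
  have hπ_fix {x : M} (hx : x ∈ LinearMap.ker φ) : π x = x := by
    simp_all [π]
  let v : {i // i ≠ i₀} → M := fun i => π (b i)
  have hli : LinearIndependent R v := by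
    let c : M →ₗ[R] ({i // i ≠ i₀} →₀ R) :=
      Finsupp.lcomapDomain Subtype.val Subtype.val_injective ∘ₗ b.repr
    refine LinearIndependent.of_comp c ?_
    convert (Finsupp.basisSingleOne (R := R) (ι := {i // i ≠ i₀})).linearIndependent
    ext i j
    simp [v, π, c, Finsupp.single_apply, Subtype.ext_iff, j.2]
  have hspan : span R (Set.range v) = LinearMap.ker φ := by
    refine le_antisymm (span_le.mpr <| Set.range_subset_iff.mpr fun i => hπ_ker _) fun x hx => ?_
    rw [← hπ_fix hx]
    refine span_le.mpr ?_ (apply_mem_span_image_of_mem_span π (b.mem_span x))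
    rintro _ ⟨_, ⟨i, rfl⟩, rfl⟩
    rcases eq_or_ne i i₀ with rfl | hi
    · simp [π, h]
    · exact subset_span ⟨⟨i, hi⟩, rfl⟩
  exact .of_basis ((Basis.span hli).map (LinearEquiv.ofEq _ _ hspan))

open Profinite NobelingProof in
theorem LocallyConstant.exists_basis_apply_eq_one (Y : Type u) [TopologicalSpace Y]
    [CompactSpace Y] [T2Space Y] [TotallyDisconnectedSpace Y] [Nonempty Y] :
    ∃ (ι : Type u) (b : Module.Basis ι ℤ (LocallyConstant Y ℤ)) (i : ι), b i = 1 := by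
  let S := Profinite.of Y
  obtain ⟨_, _⟩ := exists_wellFoundedLT {C : Set S // IsClopen C}
  have hι := Nobeling.isClosedEmbedding S
  let C := Set.range (Nobeling.ι S)
  have : Nonempty C := .map (fun y => ⟨_, y, rfl⟩) ‹Nonempty Y›
  have hnil : Products.isGood C Products.nil := by
    rw [Products.isGood, Products.lt_nil_empty]
    simp [Products.eval, Products.nil]
  have hbasis : GoodProducts.Basis C hι.isClosed_range ⟨_, hnil⟩ = 1 :=
    (Module.Basis.mk_apply _ _ _).trans (by simp [GoodProducts.eval, Products.eval, Products.nil])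
  refine ⟨GoodProducts C, (GoodProducts.Basis C hι.isClosed_range).map
    (LocallyConstant.congrLeftₗ ℤ hι.isEmbedding.toHomeomorph).symm, ⟨_, hnil⟩, ?_⟩
  ext y
  simp [hbasis]

theorem LocallyConstant.free_ker_evalₗ {Y : Type*} [TopologicalSpace Y]
    [CompactSpace Y] [T2Space Y] [TotallyDisconnectedSpace Y] (y : Y) :
    Module.Free ℤ (LinearMap.ker (evalₗ ℤ y : LocallyConstant Y ℤ →ₗ[ℤ] ℤ)) := by
  have : Nonempty Y := ⟨y⟩
  obtain ⟨ι, b, i, hi⟩ := exists_basis_apply_eq_one Y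
  exact b.free_ker_of_apply_eq_one (i₀ := i) _ (by simp [hi])

namespace OnePoint

instance totallySeparatedSpace {X : Type*} [TopologicalSpace X] [LocallyCompactSpace X]
    [T2Space X] [TotallyDisconnectedSpace X] : TotallySeparatedSpace (OnePoint X) := by
  have separate (x : X) (z : OnePoint X) (hz : (x : OnePoint X) ≠ z) :
      ∃ U : Set (OnePoint X), IsClopen U ∧ ↑x ∈ U ∧ z ∈ Uᶜ := by
    obtain ⟨K, hK, hxK, hKz⟩ :=
      exists_compact_subset (isOpen_compl_singleton.preimage continuous_coe) hz
    obtain ⟨V, hV, hxV, hVK⟩ :=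
      loc_compact_Haus_tot_disc_of_zero_dim.exists_subset_of_mem_open hxK isOpen_interior
    have hVc : IsCompact V := hK.of_isClosed_subset hV.1 (hVK.trans interior_subset)
    refine ⟨(↑) '' V, ⟨isClosed_image_coe.2 ⟨hV.1, hVc⟩, isOpen_image_coe.2 hV.2⟩,
      Set.mem_image_of_mem _ hxV, ?_⟩
    rintro ⟨y, hy, rfl⟩
    exact hKz (interior_subset (hVK hy)) rfl
  refine totallySeparatedSpace_iff_exists_isClopen.mpr fun a b hab => ?_
  cases a with
  | coe x => exact separate x b hab
  | infty =>
    cases b with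
    | infty => exact absurd rfl hab
    | coe y =>
      obtain ⟨U, hU, hyU, hU_infty⟩ := separate y ∞ hab.symm
      exact ⟨Uᶜ, hU.compl, hU_infty, by simpa using hyU⟩

variable {X R M : Type*} [TopologicalSpace X] [TopologicalSpace M] [DiscreteTopology M]

theorem isLocallyConstant_iff_of_apply_infty [Zero M] {g : OnePoint X → M}
    (hg : g ∞ = 0) :
    IsLocallyConstant g ↔
      Continuous (fun x : X => g x) ∧ HasCompactSupport (fun x : X => g x) := by
  rw [IsLocallyConstant.iff_continuous, OnePoint.continuous_iff, hg, nhds_discrete,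
    Filter.tendsto_pure, hasCompactSupport_iff_eventuallyEq, and_comm]
  rfl

variable [Semiring R] [AddCommMonoid M] [Module R M] [ContinuousAdd M] [ContinuousConstSMul R M]

noncomputable def compactlySupportedEquivKerEvalInfty :
    C_c(X, M) ≃ₗ[R] LinearMap.ker
      (LocallyConstant.evalₗ R ∞ : LocallyConstant (OnePoint X) M →ₗ[R] M) where
  toFun f := ⟨⟨fun z => z.elim 0 f, (isLocallyConstant_iff_of_apply_infty rfl).2
    ⟨f.continuous, f.hasCompactSupport⟩⟩, rfl⟩
  invFun g :=
    have hg := (isLocallyConstant_iff_of_apply_infty g.2).1 g.1.isLocallyConstant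
    ⟨⟨fun x => g.1 x, hg.1⟩, hg.2⟩
  map_add' f g := by ext z; cases z <;> simp
  map_smul' c f := by ext z; cases z <;> simp
  left_inv f := rfl
  right_inv g := by
    ext z
    cases z with
    | infty => exact g.2.symm
    | coe x => rfl

end OnePoint

namespace CompactlySupportedContinuousMap

variable {X β : Type*} [TopologicalSpace X]

theorem isCompact_preimage_singleton [TopologicalSpace β] [T1Space β] [Zero β]
    (f : C_c(X, β)) {c : β} (hc : c ≠ 0) : IsCompact (f ⁻¹' {c}) :=
  f.hasCompactSupport.of_isClosed_subset (isClosed_singleton.preimage f.continuous)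
    fun x hx => subset_tsupport f (by simp_all)

variable (X) in
theorem closure_indicator_isCompact_isOpen_eq_top :
    AddSubgroup.closure {f : C_c(X, ℤ) | ∃ U : Set X, IsCompact U ∧ IsOpen U ∧
      ∀ x : X, (f : X → ℤ) x = U.indicator 1 x} = ⊤ := by
  refine eq_top_iff.2 fun f _ => ?_
  have hfin : (Set.range f).Finite :=
    (f.hasCompactSupport.isCompact_range f.continuous).finite_of_discrete
  let χ (c : ℤ) : C_c(X, ℤ) :=
    f.compLeft ⟨Set.indicator {c} 1, continuous_of_discreteTopology⟩
  have hχ {c : ℤ} (hc : c ≠ 0) (x : X) : χ c x = (f ⁻¹' {c}).indicator 1 x := by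
    rw [compLeft_apply (by simp [hc.symm])]
    exact (Set.indicator_comp_right (g := 1) f).symm
  have hterm (c : ℤ) (x : X) : (c • χ c) x = if c = f x then c else 0 := by
    rcases eq_or_ne c 0 with rfl | hc
    · simp
    · simp [hχ hc, Set.indicator, eq_comm]
  have hsum : f = ∑ c ∈ hfin.toFinset, c • χ c := by
    ext x
    rw [sum_apply, Finset.sum_congr rfl fun c _ => hterm c x, Finset.sum_ite_eq',
      if_pos (by simp)]
  rw [hsum]
  refine AddSubgroup.sum_mem _ fun c _ => ?_
  rcases eq_or_ne c 0 with rfl | hc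
  · simp
  · refine AddSubgroup.zsmul_mem _ (AddSubgroup.subset_closure ?_) c
    exact ⟨_, f.isCompact_preimage_singleton hc, (isOpen_discrete _).preimage f.continuous,
      hχ hc⟩

end CompactlySupportedContinuousMap

/-- For a locally compact Hausdorff totally disconnected space `X`, the group
`C_c(X,ℤ)` of compactly supported continuous integer-valued functions is free abelian, and it
is generated by the characteristic functions of compact open subsets of `X`. -/
theorem stmt_7 (X : Type) [TopologicalSpace X] [LocallyCompactSpace X] [T2Space X]
    [TotallyDisconnectedSpace X] :
    Module.Free ℤ C_c(X, ℤ) ∧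
    AddSubgroup.closure
        {f : C_c(X, ℤ) | ∃ U : Set X, IsCompact U ∧ IsOpen U ∧
          ∀ x : X, (f : X → ℤ) x = U.indicator 1 x} = ⊤ := by
  have := LocallyConstant.free_ker_evalₗ (OnePoint.infty : OnePoint X)
  exact ⟨.of_equiv (OnePoint.compactlySupportedEquivKerEvalInfty (R := ℤ)).symm,
    CompactlySupportedContinuousMap.closure_indicator_isCompact_isOpen_eq_top X⟩
end
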